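/- arXiv:1704.02267 — 2 statements merged into one kernel-verified Lean document; each statement's English description precedes it below -/
import Mathlib

section
/- Assume the TBT matrix T is invertible. Then g_{21} = −U_{2n} J_{2n} g_{12}^τ J_{2m} U_{2m}, where ^τ denotes the transpose (without conjugation). -/
open Matrix

noncomputable section

/-- The scalar sequence `a_r`: `0` for `r < 0`, `i/2` for `r = 0`, `i` for `r > 0`. -/
def aC (r : ℤ) : ℂ := if r < 0 then 0 else if r = 0 then Complex.I / 2 else Complex.I

/-- `A_1`: block matrix `{𝒜_{1,p−q}}` with blocks `0`, `(i/2)I_m`, `i·I_m`. -/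
def A1 (m n : ℕ) : Matrix (Fin n × Fin m) (Fin n × Fin m) ℂ :=
  Matrix.of fun r c => if r.2 = c.2 then aC (((r.1 : ℕ) : ℤ) - ((c.1 : ℕ) : ℤ)) else 0

/-- `A_2 = diag{𝒜_{2,0}, …, 𝒜_{2,0}}`. -/
def A2 (m n : ℕ) : Matrix (Fin n × Fin m) (Fin n × Fin m) ℂ :=
  Matrix.of fun r c => if r.1 = c.1 then aC (((r.2 : ℕ) : ℤ) - ((c.2 : ℕ) : ℤ)) else 0

/-- `𝒜_1 = {a_{j−ℓ}}_{j,ℓ=1}^n`. -/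
def calA1 (n : ℕ) : Matrix (Fin n) (Fin n) ℂ :=
  Matrix.of fun p q => aC (((p : ℕ) : ℤ) - ((q : ℕ) : ℤ))

/-- `𝒜_2 = {a_{j−ℓ}}_{j,ℓ=1}^m`. -/
def calA2 (m : ℕ) : Matrix (Fin m) (Fin m) ℂ :=
  Matrix.of fun j l => aC (((j : ℕ) : ℤ) - ((l : ℕ) : ℤ))

/-- The Toeplitz-block Toeplitz matrix `T`, entry `t_{p−q}^{(j−ℓ)}`. -/
def TBT (m n : ℕ) (t : ℤ → ℤ → ℂ) : Matrix (Fin n × Fin m) (Fin n × Fin m) ℂ :=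
  Matrix.of fun r c =>
    t (((r.1 : ℕ) : ℤ) - ((c.1 : ℕ) : ℤ)) (((r.2 : ℕ) : ℤ) - ((c.2 : ℕ) : ℤ))

/-- `M_{11}`: block column, `p`-th block `(1/2)𝒯_0 + Σ_{s=1}^{p−1} 𝒯_s`. -/
def M11 (m n : ℕ) (t : ℤ → ℤ → ℂ) : Matrix (Fin n × Fin m) (Fin m) ℂ :=
  Matrix.of fun r l => (1 / 2 : ℂ) * t 0 (((r.2 : ℕ) : ℤ) - ((l : ℕ) : ℤ))
    + ∑ s ∈ Finset.range (r.1 : ℕ), t ((s : ℤ) + 1) (((r.2 : ℕ) : ℤ) - ((l : ℕ) : ℤ))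

/-- `M_{21} = [I_m I_m … I_m]`. -/
def M21 (m n : ℕ) : Matrix (Fin m) (Fin n × Fin m) ℂ :=
  Matrix.of fun j c => if j = c.2 then 1 else 0

/-- `M_{31} = M_{21}^*`. -/
def M31 (m n : ℕ) : Matrix (Fin n × Fin m) (Fin m) ℂ := (M21 m n)ᴴ

/-- `M_{41}`: block row, `q`-th block `(1/2)𝒯_0 + Σ_{s=1}^{q−1} 𝒯_{−s}`. -/
def M41 (m n : ℕ) (t : ℤ → ℤ → ℂ) : Matrix (Fin m) (Fin n × Fin m) ℂ :=
  Matrix.of fun j c => (1 / 2 : ℂ) * t 0 (((j : ℕ) : ℤ) - ((c.2 : ℕ) : ℤ))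
    + ∑ s ∈ Finset.range (c.1 : ℕ), t (-((s : ℤ) + 1)) (((j : ℕ) : ℤ) - ((c.2 : ℕ) : ℤ))

/-- `j`-th entry of the column `ℳ_{12}^{(r)}`. -/
def m12e (m : ℕ) (t : ℤ → ℤ → ℂ) (r : ℤ) (j : Fin m) : ℂ :=
  (1 / 2 : ℂ) * t r 0 + ∑ s ∈ Finset.range (j : ℕ), t r ((s : ℤ) + 1)

/-- `ℓ`-th entry of the row `ℳ_{42}^{(r)}`. -/
def m42e (m : ℕ) (t : ℤ → ℤ → ℂ) (r : ℤ) (l : Fin m) : ℂ :=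
  (1 / 2 : ℂ) * t r 0 + ∑ s ∈ Finset.range (l : ℕ), t r (-((s : ℤ) + 1))

/-- `M_{12} = {ℳ_{12}^{(p−q)}}`. -/
def M12 (m n : ℕ) (t : ℤ → ℤ → ℂ) : Matrix (Fin n × Fin m) (Fin n) ℂ :=
  Matrix.of fun r q => m12e m t (((r.1 : ℕ) : ℤ) - ((q : ℕ) : ℤ)) r.2

/-- `M_{22}`. -/
def M22 (m n : ℕ) : Matrix (Fin n) (Fin n × Fin m) ℂ :=
  Matrix.of fun p c => if p = c.1 then 1 else 0

/-- `M_{32} = M_{22}^*`. -/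
def M32 (m n : ℕ) : Matrix (Fin n × Fin m) (Fin n) ℂ := (M22 m n)ᴴ

/-- `M_{42} = {ℳ_{42}^{(p−q)}}`. -/
def M42 (m n : ℕ) (t : ℤ → ℤ → ℂ) : Matrix (Fin n) (Fin n × Fin m) ℂ :=
  Matrix.of fun p c => m42e m t (((p : ℕ) : ℤ) - ((c.1 : ℕ) : ℤ)) c.2

/-- `K`: the `1×mn` row, `q`-th block `(1/2)ℳ_{42}^{(0)} + Σ_{s=1}^{q−1} ℳ_{42}^{(−s)}`. -/
def Krow (m n : ℕ) (t : ℤ → ℤ → ℂ) : (Fin n × Fin m) → ℂ :=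
  fun c => (1 / 2 : ℂ) * m42e m t 0 c.2
    + ∑ s ∈ Finset.range (c.1 : ℕ), m42e m t (-((s : ℤ) + 1)) c.2

/-- `K_{11}`: `p`-th row `(1/2)ℳ_{42}^{(0)} + Σ_{s=1}^{p−1} ℳ_{42}^{(s)}`. -/
def K11 (m n : ℕ) (t : ℤ → ℤ → ℂ) : Matrix (Fin n) (Fin m) ℂ :=
  Matrix.of fun p l => (1 / 2 : ℂ) * m42e m t 0 l
    + ∑ s ∈ Finset.range (p : ℕ), m42e m t ((s : ℤ) + 1) l

/-- `K_{12}`: `q`-th column `(1/2)ℳ_{12}^{(0)} + Σ_{s=1}^{q−1} ℳ_{12}^{(−s)}`. -/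
def K12 (m n : ℕ) (t : ℤ → ℤ → ℂ) : Matrix (Fin m) (Fin n) ℂ :=
  Matrix.of fun j q => (1 / 2 : ℂ) * m12e m t 0 j
    + ∑ s ∈ Finset.range (q : ℕ), m12e m t (-((s : ℤ) + 1)) j

/-- `Π_1 = [M_{11} M_{31}]`. -/
def Pi1 (m n : ℕ) (t : ℤ → ℤ → ℂ) : Matrix (Fin n × Fin m) (Fin m ⊕ Fin m) ℂ :=
  fromCols (M11 m n t) (M31 m n)

/-- `Π_2 = [M_{12} M_{32}]`. -/
def Pi2 (m n : ℕ) (t : ℤ → ℤ → ℂ) : Matrix (Fin n × Fin m) (Fin n ⊕ Fin n) ℂ :=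
  fromCols (M12 m n t) (M32 m n)

/-- `Π̂_1 = col[M_{21}; M_{41}]`. -/
def PiHat1 (m n : ℕ) (t : ℤ → ℤ → ℂ) : Matrix (Fin m ⊕ Fin m) (Fin n × Fin m) ℂ :=
  fromRows (M21 m n) (M41 m n t)

/-- `Π̂_2 = col[M_{22}; M_{42}]`. -/
def PiHat2 (m n : ℕ) (t : ℤ → ℤ → ℂ) : Matrix (Fin n ⊕ Fin n) (Fin n × Fin m) ℂ :=
  fromRows (M22 m n) (M42 m n t)

/-- All-ones vector. -/
def onesV (k : Type*) : k → ℂ := fun _ => 1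

/-- `g_{12} = i·Π̂_1 T^{-1} Π_2 − i·[[𝟏_m 𝟏_n^*, 0],[K_{12}, 0]]`. -/
def g12M (m n : ℕ) (t : ℤ → ℤ → ℂ) : Matrix (Fin m ⊕ Fin m) (Fin n ⊕ Fin n) ℂ :=
  Complex.I • (PiHat1 m n t * (TBT m n t)⁻¹ * Pi2 m n t)
    - Complex.I • fromBlocks (vecMulVec (onesV (Fin m)) (onesV (Fin n))) 0 (K12 m n t) 0

/-- `g_{21} = i·Π̂_2 T^{-1} Π_1 − i·[[𝟏_n 𝟏_m^*, 0],[K_{11}, 0]]`. -/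
def g21M (m n : ℕ) (t : ℤ → ℤ → ℂ) : Matrix (Fin n ⊕ Fin n) (Fin m ⊕ Fin m) ℂ :=
  Complex.I • (PiHat2 m n t * (TBT m n t)⁻¹ * Pi1 m n t)
    - Complex.I • fromBlocks (vecMulVec (onesV (Fin n)) (onesV (Fin m))) 0 (K11 m n t) 0

/-- The `k×k` flip (anti-diagonal) matrix. -/
def flipU (k : ℕ) : Matrix (Fin k) (Fin k) ℂ :=
  Matrix.of fun p q => if (p : ℕ) + (q : ℕ) + 1 = k then 1 else 0

/-- `U_{2k}`, the `2k×2k` flip matrix on the sum type. -/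
def U2 (k : ℕ) : Matrix (Fin k ⊕ Fin k) (Fin k ⊕ Fin k) ℂ :=
  fromBlocks 0 (flipU k) (flipU k) 0

/-- `J_{2k} = diag{I_k, −I_k}`. -/
def J2 (k : ℕ) : Matrix (Fin k ⊕ Fin k) (Fin k ⊕ Fin k) ℂ :=
  fromBlocks 1 0 0 (-1)

/-- `U = U_{mn}`, the `mn×mn` flip matrix (global index `m·p + j`). -/
def UmnM (m n : ℕ) : Matrix (Fin n × Fin m) (Fin n × Fin m) ℂ :=
  Matrix.of fun r c =>
    if m * (r.1 : ℕ) + (r.2 : ℕ) + (m * (c.1 : ℕ) + (c.2 : ℕ)) + 1 = m * n then 1 else 0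

/-- `ψ(λ) = (λ + i/2)/(λ − i/2)`. -/
def psiM (l : ℂ) : ℂ := (l + Complex.I / 2) / (l - Complex.I / 2)

/-- `h(y_1, y_2)`, entry `y_1^{p−1} y_2^{j−1}`. -/
def hVec (m n : ℕ) (y1 y2 : ℂ) : (Fin n × Fin m) → ℂ :=
  fun r => y1 ^ (r.1 : ℕ) * y2 ^ (r.2 : ℕ)

/-- `ω(λ,μ) = 𝟏^*(A_1^*−μ_1)^{-1}(A_2^*−μ_2)^{-1}T^{-1}(A_2−λ_2)^{-1}(A_1−λ_1)^{-1}𝟏`. -/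
def omegaF (m n : ℕ) (t : ℤ → ℤ → ℂ) (l1 l2 u1 u2 : ℂ) : ℂ :=
  star (onesV (Fin n × Fin m)) ⬝ᵥ
    ((((A1 m n)ᴴ - u1 • 1)⁻¹ * ((A2 m n)ᴴ - u2 • 1)⁻¹ * (TBT m n t)⁻¹ *
      (A2 m n - l2 • 1)⁻¹ * (A1 m n - l1 • 1)⁻¹) *ᵥ onesV (Fin n × Fin m))

/-- `ρ(y,z) = h(conj z_1, conj z_2)^* T^{-1} h(y_1,y_2)`. -/
def rhoF (m n : ℕ) (t : ℤ → ℤ → ℂ) (y1 y2 z1 z2 : ℂ) : ℂ :=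
  star (hVec m n ((starRingEnd ℂ) z1) ((starRingEnd ℂ) z2)) ⬝ᵥ
    ((TBT m n t)⁻¹ *ᵥ hVec m n y1 y2)

/-- `Γ_1 = T^{-1}Π_1`. -/
def Gam1 (m n : ℕ) (t : ℤ → ℤ → ℂ) : Matrix (Fin n × Fin m) (Fin m ⊕ Fin m) ℂ :=
  (TBT m n t)⁻¹ * Pi1 m n t

/-- `Γ_2 = T^{-1}Π_2`. -/
def Gam2 (m n : ℕ) (t : ℤ → ℤ → ℂ) : Matrix (Fin n × Fin m) (Fin n ⊕ Fin n) ℂ :=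
  (TBT m n t)⁻¹ * Pi2 m n t

/-- `Γ̂_1 = Π̂_1 T^{-1}`. -/
def GamHat1 (m n : ℕ) (t : ℤ → ℤ → ℂ) : Matrix (Fin m ⊕ Fin m) (Fin n × Fin m) ℂ :=
  PiHat1 m n t * (TBT m n t)⁻¹

/-- `Γ̂_2 = Π̂_2 T^{-1}`. -/
def GamHat2 (m n : ℕ) (t : ℤ → ℤ → ℂ) : Matrix (Fin n ⊕ Fin n) (Fin n × Fin m) ℂ :=
  PiHat2 m n t * (TBT m n t)⁻¹

/-- `Γ = [Γ_1 Γ_2]`. -/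
def GammaFull (m n : ℕ) (t : ℤ → ℤ → ℂ) :
    Matrix (Fin n × Fin m) ((Fin m ⊕ Fin m) ⊕ (Fin n ⊕ Fin n)) ℂ :=
  fromCols (Gam1 m n t) (Gam2 m n t)

/-- `Γ̂ = col[Γ̂_1; Γ̂_2]`. -/
def GammaHatFull (m n : ℕ) (t : ℤ → ℤ → ℂ) :
    Matrix ((Fin m ⊕ Fin m) ⊕ (Fin n ⊕ Fin n)) (Fin n × Fin m) ℂ :=
  fromRows (GamHat1 m n t) (GamHat2 m n t)

/-- The row vector `u(μ)`. -/
def uRow (m n : ℕ) (t : ℤ → ℤ → ℂ) (u1 u2 : ℂ) :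
    ((Fin m ⊕ Fin m) ⊕ (Fin n ⊕ Fin n)) → ℂ :=
  star (onesV (Fin n × Fin m)) ᵥ*
      (((A1 m n)ᴴ - u1 • 1)⁻¹ * ((A2 m n)ᴴ - u2 • 1)⁻¹ * GammaFull m n t)
    - Complex.I • Sum.elim
        (Sum.elim (star (onesV (Fin m)) ᵥ* ((calA2 m)ᴴ - u2 • 1)⁻¹) (0 : Fin m → ℂ))
        (Sum.elim (star (onesV (Fin n)) ᵥ* ((calA1 n)ᴴ - u1 • 1)⁻¹) (0 : Fin n → ℂ))

/-- The column vector `û(λ)`. -/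
def uHatCol (m n : ℕ) (t : ℤ → ℤ → ℂ) (l1 l2 : ℂ) :
    ((Fin m ⊕ Fin m) ⊕ (Fin n ⊕ Fin n)) → ℂ :=
  (GammaHatFull m n t * (A2 m n - l2 • 1)⁻¹ * (A1 m n - l1 • 1)⁻¹) *ᵥ onesV (Fin n × Fin m)
    + Complex.I • Sum.elim
        (Sum.elim (0 : Fin m → ℂ) ((calA2 m - l2 • 1)⁻¹ *ᵥ onesV (Fin m)))
        (Sum.elim (0 : Fin n → ℂ) ((calA1 n - l1 • 1)⁻¹ *ᵥ onesV (Fin n)))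

/-- `P_1 = diag{I_{2m}, 0}`. -/
def P1M (m n : ℕ) :
    Matrix ((Fin m ⊕ Fin m) ⊕ (Fin n ⊕ Fin n)) ((Fin m ⊕ Fin m) ⊕ (Fin n ⊕ Fin n)) ℂ :=
  fromBlocks 1 0 0 0

/-- `P_2 = I − P_1`. -/
def P2M (m n : ℕ) :
    Matrix ((Fin m ⊕ Fin m) ⊕ (Fin n ⊕ Fin n)) ((Fin m ⊕ Fin m) ⊕ (Fin n ⊕ Fin n)) ℂ :=
  1 - P1M m n

/-- `G(λ)`, built from `g_{12}` and `g_{21}`. -/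
def GMat (m n : ℕ) (g12 : Matrix (Fin m ⊕ Fin m) (Fin n ⊕ Fin n) ℂ)
    (g21 : Matrix (Fin n ⊕ Fin n) (Fin m ⊕ Fin m) ℂ) (l1 l2 : ℂ) :
    Matrix ((Fin m ⊕ Fin m) ⊕ (Fin n ⊕ Fin n)) ((Fin m ⊕ Fin m) ⊕ (Fin n ⊕ Fin n)) ℂ :=
  fromBlocks (fromBlocks (calA2 m - l2 • 1) 0 0 (calA2 m - l2 • 1)) g12
             g21 (fromBlocks (calA1 n - l1 • 1) 0 0 (calA1 n - l1 • 1))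

/-- `G` as a matrix over the polynomial ring `ℂ[λ_1, λ_2]` (variables `X 0 = λ_1`, `X 1 = λ_2`). -/
def GPoly (m n : ℕ) (g12 : Matrix (Fin m ⊕ Fin m) (Fin n ⊕ Fin n) ℂ)
    (g21 : Matrix (Fin n ⊕ Fin n) (Fin m ⊕ Fin m) ℂ) :
    Matrix ((Fin m ⊕ Fin m) ⊕ (Fin n ⊕ Fin n)) ((Fin m ⊕ Fin m) ⊕ (Fin n ⊕ Fin n))
      (MvPolynomial (Fin 2) ℂ) :=
  fromBlocks
    (fromBlocks ((calA2 m).map MvPolynomial.C - (MvPolynomial.X 1 : MvPolynomial (Fin 2) ℂ) • 1) 0 0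
      ((calA2 m).map MvPolynomial.C - (MvPolynomial.X 1 : MvPolynomial (Fin 2) ℂ) • 1))
    (g12.map MvPolynomial.C)
    (g21.map MvPolynomial.C)
    (fromBlocks ((calA1 n).map MvPolynomial.C - (MvPolynomial.X 0 : MvPolynomial (Fin 2) ℂ) • 1) 0 0
      ((calA1 n).map MvPolynomial.C - (MvPolynomial.X 0 : MvPolynomial (Fin 2) ℂ) • 1))

/-- The vector `col[0_m; 𝟏_m; 0_n; 𝟏_n]`. -/
def eVec (m n : ℕ) : ((Fin m ⊕ Fin m) ⊕ (Fin n ⊕ Fin n)) → ℂ :=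
  Sum.elim (Sum.elim (0 : Fin m → ℂ) (onesV (Fin m))) (Sum.elim (0 : Fin n → ℂ) (onesV (Fin n)))

/-- `diag{J_{2m}U_{2m}, J_{2n}U_{2n}}`. -/
def DJU (m n : ℕ) :
    Matrix ((Fin m ⊕ Fin m) ⊕ (Fin n ⊕ Fin n)) ((Fin m ⊕ Fin m) ⊕ (Fin n ⊕ Fin n)) ℂ :=
  fromBlocks (J2 m * U2 m) 0 0 (J2 n * U2 n)

/-- The block column `col[I_m; I_m; …; I_m]`. -/
def EcolId (m n : ℕ) : Matrix (Fin n × Fin m) (Fin m) ℂ :=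
  Matrix.of fun r l => if r.2 = l then 1 else 0


/-! Let `U` reverse both indices of `Fin n × Fin m`. A Toeplitz-block Toeplitz matrix is
persymmetric, `Tᵀ = U T U`, so `(T⁻¹)ᵀ = U T⁻¹ U`. A Toeplitz sum `∑_q f (p - q)` splits into two
half-weighted partial sums, one running up to `p` and one running up to the reversed index; with
this one checks `U_{2n} J_{2n} Π₂ᵀ U = col[0; M₂₂] T - Π̂₂` and `U Π̂₁ᵀ J_{2m} U_{2m} = Π₁ - T [M₃₁ 0]`.
Substituting into `g₁₂ᵀ`, the extra factors `T` cancel against `T⁻¹`, leaving `-Π̂₂ T⁻¹ Π₁` plus a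
constant matrix, which the same splitting identifies with the constant term of `g₂₁`. -/

open Finset

lemma Matrix.mul_submatrix_mul {l m o α : Type*} [Fintype m] [NonUnitalNonAssocSemiring α]
    (A : Matrix l m α) (B : Matrix m m α) (C : Matrix m o α) (e : m ≃ m) :
    A * B.submatrix e e * C = A.submatrix id e.symm * B * C.submatrix e.symm id := by
  have hA : A = (A.submatrix id e.symm).submatrix id e := by simp
  have hC : C = (C.submatrix e.symm id).submatrix e id := by simp
  conv_lhs => rw [hA, hC, submatrix_mul_equiv, submatrix_mul_equiv]
  simp

lemma Matrix.sub_mul_nonsing_inv_mul_sub {l n o α : Type*} [Fintype n] [DecidableEq n]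
    [CommRing α] {T : Matrix n n α} (hT : IsUnit T) (E P : Matrix l n α) (Q F : Matrix n o α) :
    (E * T - P) * T⁻¹ * (Q - T * F) = E * Q - E * T * F - P * T⁻¹ * Q + P * F := by
  have hdet := (isUnit_iff_isUnit_det T).mp hT
  simp only [Matrix.sub_mul, Matrix.mul_sub, Matrix.mul_assoc,
    mul_nonsing_inv_cancel_left _ _ hdet, nonsing_inv_mul_cancel_left _ _ hdet]
  abel

section TrapezoidalSum

variable {K : Type*} [Field K]

/-- `f 0 / 2 + f 1 + ⋯ + f k`: the entries of `M₁₁, M₄₁, ℳ₁₂, ℳ₄₂, K₁₁, K₁₂` are such sums. -/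
def trapSum (f : ℤ → K) (k : ℕ) : K := (1 / 2 : K) * f 0 + ∑ s ∈ range k, f ((s : ℤ) + 1)

lemma trapSum_sub (f g : ℤ → K) (k : ℕ) :
    trapSum (fun r => f r - g r) k = trapSum f k - trapSum g k := by
  simp only [trapSum, sum_sub_distrib]
  ring

lemma trapSum_sum {ι : Type*} (s : Finset ι) (f : ι → ℤ → K) (k : ℕ) :
    trapSum (fun r => ∑ i ∈ s, f i r) k = ∑ i ∈ s, trapSum (f i) k := by
  simp only [trapSum, sum_add_distrib, mul_sum]
  rw [sum_comm]

lemma sum_range_succ_natCast_sub (f : ℤ → K) (p : ℕ) :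
    ∑ q ∈ range (p + 1), f ((p : ℤ) - q) = f 0 + ∑ s ∈ range p, f ((s : ℤ) + 1) := by
  induction p with
  | zero => simp
  | succ p ih =>
    rw [sum_range_succ']
    push_cast
    simp only [add_sub_add_right_eq_sub, sub_zero]
    rw [ih, sum_range_succ]
    ring

variable [CharZero K]

lemma sum_fin_const_sub_eq_trapSum (f : ℤ → K) {k : ℕ} (p : Fin k) :
    ∑ q : Fin k, f ((p : ℤ) - q) = trapSum f p + trapSum (fun r => f (-r)) p.rev := by
  obtain ⟨p, hp⟩ := p
  obtain ⟨r, rfl⟩ : ∃ r, k = p + 1 + r := ⟨k - (p + 1), by omega⟩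
  have hrev : ((⟨p, hp⟩ : Fin (p + 1 + r)).rev : ℕ) = r := by simp [Fin.val_rev]
  have hneg (s : ℕ) : (p : ℤ) - ((p + 1 + s : ℕ) : ℤ) = -((s : ℤ) + 1) := by push_cast; ring
  rw [Fin.sum_univ_eq_sum_range (fun q : ℕ => f ((p : ℤ) - q)), sum_range_add,
    sum_range_succ_natCast_sub, hrev]
  simp only [trapSum, neg_zero, hneg]
  ring

lemma sum_fin_sub_const_eq_trapSum (f : ℤ → K) {k : ℕ} (c : Fin k) :
    ∑ j : Fin k, f ((j : ℤ) - c) = trapSum f c.rev + trapSum (fun r => f (-r)) c := by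
  have h := sum_fin_const_sub_eq_trapSum (fun r => f (-r)) c
  simp only [neg_sub, neg_neg] at h
  rw [h, add_comm]

end TrapezoidalSum

section Flips

lemma flipU_apply (k : ℕ) (p q : Fin k) : flipU k p q = if p.rev = q then 1 else 0 := by
  have hp := p.is_lt
  have hq := q.is_lt
  simp only [flipU, of_apply, Fin.ext_iff, Fin.val_rev]
  congr 1
  exact propext (by omega)

lemma flipU_mul_apply {α : Type*} {k : ℕ} (A : Matrix (Fin k) α ℂ) (p : Fin k) (c : α) :
    (flipU k * A) p c = A p.rev c := by
  simp [mul_apply, flipU_apply, ite_mul]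

lemma mul_flipU_apply {α : Type*} [Fintype α] {k : ℕ} (A : Matrix α (Fin k) ℂ) (r : α)
    (q : Fin k) : (A * flipU k) r q = A r q.rev := by
  simp [mul_apply, flipU_apply, Fin.rev_eq_iff, mul_ite]

lemma U2_mul_J2 (k : ℕ) : U2 k * J2 k = fromBlocks 0 (-flipU k) (flipU k) 0 := by
  simp [U2, J2, fromBlocks_multiply]

lemma J2_mul_U2 (k : ℕ) : J2 k * U2 k = fromBlocks 0 (flipU k) (-flipU k) 0 := by
  simp [U2, J2, fromBlocks_multiply]

end Flips

/-- The flip matrix `U_{mn}`, as the permutation it induces on `Fin n × Fin m`. -/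
abbrev revProd (n m : ℕ) : Equiv.Perm (Fin n × Fin m) := Fin.revPerm.prodCongr Fin.revPerm

lemma revProd_symm (n m : ℕ) : (revProd n m).symm = revProd n m := rfl

section TBTBlocks

variable (m n : ℕ) (t : ℤ → ℤ → ℂ)

lemma transpose_TBT : (TBT m n t)ᵀ = (TBT m n t).submatrix (revProd n m) (revProd n m) := by
  ext r c
  simp [TBT]

lemma transpose_inv_TBT :
    ((TBT m n t)⁻¹)ᵀ = (TBT m n t)⁻¹.submatrix (revProd n m) (revProd n m) := by
  rw [transpose_nonsing_inv, transpose_TBT, inv_submatrix_equiv]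

variable {m n}

lemma M22_mul_apply {α : Type*} (A : Matrix (Fin n × Fin m) α ℂ) (p : Fin n) (c : α) :
    (M22 m n * A) p c = ∑ j, A (p, j) c := by
  rw [mul_apply, Fintype.sum_prod_type_right]
  simp [M22, ite_mul]

lemma mul_M31_apply {α : Type*} [Fintype α] (A : Matrix α (Fin n × Fin m) ℂ) (r : α)
    (l : Fin m) : (A * M31 m n) r l = ∑ q, A r (q, l) := by
  simp [mul_apply, Fintype.sum_prod_type, M31, M21, conjTranspose_apply, mul_ite,
    apply_ite (star : ℂ → ℂ)]

lemma m12e_rev (r : ℤ) (l : Fin m) :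
    m12e m t r l.rev = ∑ j : Fin m, t r ((j : ℤ) - l) - m42e m t r l := by
  rw [sum_fin_sub_const_eq_trapSum]
  simp [m12e, m42e, trapSum]

variable (m n)

lemma submatrix_transpose_M12 :
    (M12 m n t)ᵀ.submatrix Fin.rev (revProd n m) = M22 m n * TBT m n t - M42 m n t := by
  ext p c
  simp [M22_mul_apply, M12, M42, TBT, m12e_rev]

lemma submatrix_transpose_M32 : (M32 m n)ᵀ.submatrix Fin.rev (revProd n m) = M22 m n := by
  ext p c
  simp [M32, M22, conjTranspose_apply, apply_ite (star : ℂ → ℂ)]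

lemma submatrix_transpose_M41 :
    (M41 m n t)ᵀ.submatrix (revProd n m) Fin.rev = TBT m n t * M31 m n - M11 m n t := by
  ext c l
  rw [Matrix.sub_apply, mul_M31_apply]
  simp only [TBT, of_apply]
  rw [sum_fin_const_sub_eq_trapSum (fun r => t r ((c.2 : ℤ) - l))]
  simp [M41, M11, trapSum]

lemma submatrix_transpose_M21 : (M21 m n)ᵀ.submatrix (revProd n m) Fin.rev = M31 m n := by
  ext c l
  simp [M31, M21, conjTranspose_apply, apply_ite (star : ℂ → ℂ)]

lemma U2_mul_J2_mul_submatrix_transpose_Pi2 :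
    U2 n * J2 n * (Pi2 m n t)ᵀ.submatrix id (revProd n m)
      = fromRows 0 (M22 m n) * TBT m n t - PiHat2 m n t := by
  rw [U2_mul_J2, fromRows_mul, Matrix.zero_mul, PiHat2]
  ext (p | p) c
  · simpa [Pi2, mul_apply, Fintype.sum_sum_type, flipU_apply] using
      congr_fun₂ (submatrix_transpose_M32 m n) p c
  · simpa [Pi2, mul_apply, Fintype.sum_sum_type, flipU_apply] using
      congr_fun₂ (submatrix_transpose_M12 m n t) p c

lemma submatrix_transpose_PiHat1_mul_J2_mul_U2 :
    (PiHat1 m n t)ᵀ.submatrix (revProd n m) id * (J2 m * U2 m)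
      = Pi1 m n t - TBT m n t * fromCols (M31 m n) 0 := by
  rw [J2_mul_U2, mul_fromCols, Matrix.mul_zero, Pi1]
  ext c (l | l)
  · have h := congr_fun₂ (submatrix_transpose_M41 m n t) c l
    simp only [submatrix_apply, transpose_apply, Matrix.sub_apply, Equiv.prodCongr_apply] at h
    simp [PiHat1, mul_apply, Fintype.sum_sum_type, flipU_apply, Fin.rev_eq_iff, h]
  · simpa [PiHat1, mul_apply, Fintype.sum_sum_type, flipU_apply, Fin.rev_eq_iff] using
      congr_fun₂ (submatrix_transpose_M21 m n) c l

lemma M22_mul_M31 : M22 m n * M31 m n = vecMulVec (onesV (Fin n)) (onesV (Fin m)) := by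
  ext p l
  simp [M22_mul_apply, M31, M21, vecMulVec, onesV]

lemma K11_eq : K11 m n t = M42 m n t * M31 m n + M22 m n * M11 m n t
    - M22 m n * TBT m n t * M31 m n + (K12 m n t)ᵀ.submatrix Fin.rev Fin.rev := by
  ext p l
  set S : ℤ → ℂ := fun r => ∑ j : Fin m, t r ((j : ℤ) - l)
  have hK11 : K11 m n t p l = trapSum (fun r => m42e m t r l) p := rfl
  have hM42 : (M42 m n t * M31 m n) p l
      = trapSum (fun r => m42e m t r l) p + trapSum (fun r => m42e m t (-r) l) p.rev := by
    rw [mul_M31_apply, ← sum_fin_const_sub_eq_trapSum (fun r => m42e m t r l)]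
    rfl
  have hM11 : (M22 m n * M11 m n t) p l = trapSum S p := by
    rw [M22_mul_apply, trapSum_sum]
    rfl
  have hTBT : (M22 m n * TBT m n t * M31 m n) p l
      = trapSum S p + trapSum (fun r => S (-r)) p.rev := by
    rw [mul_M31_apply, ← sum_fin_const_sub_eq_trapSum S]
    simp [M22_mul_apply, TBT, S]
  have hK12 : (K12 m n t)ᵀ.submatrix Fin.rev Fin.rev p l
      = trapSum (fun r => S (-r)) p.rev - trapSum (fun r => m42e m t (-r) l) p.rev := by
    rw [← trapSum_sub]
    simp [K12, trapSum, m12e_rev, S]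
  simp only [Matrix.add_apply, Matrix.sub_apply, hM42, hM11, hTBT, hK12, hK11]
  ring

def g12Const : Matrix (Fin m ⊕ Fin m) (Fin n ⊕ Fin n) ℂ :=
  fromBlocks (vecMulVec (onesV (Fin m)) (onesV (Fin n))) 0 (K12 m n t) 0

def g21Const : Matrix (Fin n ⊕ Fin n) (Fin m ⊕ Fin m) ℂ :=
  fromBlocks (vecMulVec (onesV (Fin n)) (onesV (Fin m))) 0 (K11 m n t) 0

lemma g12M_eq :
    g12M m n t = Complex.I • (PiHat1 m n t * (TBT m n t)⁻¹ * Pi2 m n t)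
      - Complex.I • g12Const m n t := rfl

lemma g21M_eq :
    g21M m n t = Complex.I • (PiHat2 m n t * (TBT m n t)⁻¹ * Pi1 m n t)
      - Complex.I • g21Const m n t := rfl

lemma g21Const_eq : g21Const m n t
    = fromRows 0 (M22 m n) * Pi1 m n t
      - fromRows 0 (M22 m n) * TBT m n t * fromCols (M31 m n) 0
      + PiHat2 m n t * fromCols (M31 m n) 0
      - U2 n * J2 n * (g12Const m n t)ᵀ * (J2 m * U2 m) := by
  rw [U2_mul_J2, J2_mul_U2, g12Const, g21Const, fromBlocks_transpose, Pi1, PiHat2,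
    fromRows_mul_fromCols, fromRows_mul, fromRows_mul_fromCols, fromRows_mul_fromCols,
    fromBlocks_multiply, fromBlocks_multiply]
  ext (p | p) (l | l)
  · simp [M22_mul_M31]
  · simp
  · rw [K11_eq]
    simp [mul_flipU_apply, flipU_mul_apply, sub_eq_add_neg, add_assoc, add_left_comm]
  · simp [M22_mul_M31, mul_flipU_apply, flipU_mul_apply, vecMulVec, onesV]

end TBTBlocks

theorem g21_from_g12_general (m n : ℕ) (t : ℤ → ℤ → ℂ)
    (hT : IsUnit (TBT m n t)) :
    g21M m n t = -(U2 n * J2 n * (g12M m n t)ᵀ * J2 m * U2 m) := by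
  have hflip : U2 n * J2 n * (g12M m n t)ᵀ * J2 m * U2 m
      = Complex.I • ((fromRows 0 (M22 m n) * TBT m n t - PiHat2 m n t) * (TBT m n t)⁻¹
          * (Pi1 m n t - TBT m n t * fromCols (M31 m n) 0))
        - Complex.I • (U2 n * J2 n * (g12Const m n t)ᵀ * (J2 m * U2 m)) := by
    rw [← U2_mul_J2_mul_submatrix_transpose_Pi2, ← submatrix_transpose_PiHat1_mul_J2_mul_U2,
      g12M_eq, transpose_sub, transpose_smul, transpose_smul, transpose_mul, transpose_mul,
      transpose_inv_TBT, ← Matrix.mul_assoc, Matrix.mul_submatrix_mul, revProd_symm]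
    simp only [Matrix.mul_sub, Matrix.sub_mul, Matrix.mul_smul, Matrix.smul_mul, Matrix.mul_assoc]
  rw [hflip, Matrix.sub_mul_nonsing_inv_mul_sub hT, g21M_eq, g21Const_eq m n t]
  module

/-- `g_{21} = −U_{2n} J_{2n} g_{12}^τ J_{2m} U_{2m}`. -/
theorem g21_from_g12 (m n : ℕ) (hm : 0 < m) (hn : 0 < n) (t : ℤ → ℤ → ℂ)
    (hT : IsUnit (TBT m n t)) :
    g21M m n t = -(U2 n * J2 n * (g12M m n t)ᵀ * J2 m * U2 m) :=
  g21_from_g12_general m n t hT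

end
end

section
/- For all complex μ1, μ2 not in {i/2, −i/2}: 𝟏^*(A_1^* − μ1 I)^{-1}(A_2^* − μ2 I)^{-1} = ((μ1 − i/2)/(μ1 + i/2))^n · ((μ2 − i/2)/(μ2 + i/2))^m · 𝟏^*(A_1^* + μ1 I)^{-1}(A_2^* + μ2 I)^{-1} · U. -/
open Matrix

noncomputable section

/-! `A₁ = 𝒜₁ ⊗ I` and `A₂ = I ⊗ 𝒜₂`, so the product of the two resolvents is the Kronecker product
of the resolvents of the upper triangular Toeplitz matrices `𝒜ᴴ`, and `U = U_n ⊗ U_m`; hence both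
sides factor and the claim reduces to one factor at a time. There, `𝟏ᵀ(𝒜ᴴ - u)⁻¹` is the geometric
row `p ↦ -ψ(u)ᵖ / (u + i/2)` with the Cayley transform `ψ(u) = (u - i/2)/(u + i/2)`. As
`ψ(-u) = ψ(u)⁻¹`, reversing the row for `-u` and multiplying by `ψ(u)ᵏ` returns the row for `u`
up to the sign `-1`, and the signs of the two factors cancel. -/

open scoped Kronecker

section Kronecker

variable {R ι κ : Type*} [CommRing R] [DecidableEq ι] [DecidableEq κ]

theorem kronecker_one_sub_smul_one (X : Matrix ι ι R) (u : R) :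
    X ⊗ₖ (1 : Matrix κ κ R) - u • 1 = (X - u • 1) ⊗ₖ 1 := by
  simp only [sub_eq_add_neg, add_kronecker, ← neg_smul, smul_kronecker, one_kronecker_one]

theorem one_kronecker_sub_smul_one (Y : Matrix κ κ R) (v : R) :
    (1 : Matrix ι ι R) ⊗ₖ Y - v • 1 = 1 ⊗ₖ (Y - v • 1) := by
  simp only [sub_eq_add_neg, kronecker_add, ← neg_smul, kronecker_smul, one_kronecker_one]

theorem inv_kronecker_one_sub_smul_mul_inv [Fintype ι] [Fintype κ] (X : Matrix ι ι R)
    (Y : Matrix κ κ R) (u v : R) :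
    (X ⊗ₖ 1 - u • 1)⁻¹ * (1 ⊗ₖ Y - v • 1)⁻¹ = (X - u • 1)⁻¹ ⊗ₖ (Y - v • 1)⁻¹ := by
  rw [kronecker_one_sub_smul_one, one_kronecker_sub_smul_one, inv_kronecker, inv_kronecker,
    inv_one, inv_one, ← mul_kronecker_mul, Matrix.mul_one, Matrix.one_mul]

end Kronecker

theorem vecMul_kronecker {R ι ι' κ κ' : Type*} [CommSemiring R] [Fintype ι] [Fintype κ]
    (v : ι → R) (w : κ → R) (P : Matrix ι ι' R) (Q : Matrix κ κ' R) :
    (fun i => v i.1 * w i.2) ᵥ* (P ⊗ₖ Q) = fun j => (v ᵥ* P) j.1 * (w ᵥ* Q) j.2 := by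
  funext j
  simp only [vecMul, dotProduct, Fintype.sum_prod_type, kroneckerMap_apply, Finset.sum_mul_sum]
  exact Finset.sum_congr rfl fun _ _ => Finset.sum_congr rfl fun _ _ => by ring

theorem vecMul_nonsing_inv_eq_of_vecMul_eq {R ι : Type*} [CommRing R] [Fintype ι]
    [DecidableEq ι] {M : Matrix ι ι R} (hM : IsUnit M.det) {v w : ι → R} (h : w ᵥ* M = v) :
    v ᵥ* M⁻¹ = w := by
  rw [← h, vecMul_vecMul, mul_nonsing_inv _ hM, vecMul_one]

theorem Fin.sum_Iio_eq_sum_range {M : Type*} [AddCommMonoid M] {k : ℕ} (f : ℕ → M) (q : Fin k) :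
    ∑ p ∈ Finset.Iio q, f p = ∑ i ∈ Finset.range q, f i := by
  rw [← Nat.Iio_eq_range, ← Fin.map_valEmbedding_Iio, Finset.sum_map]
  rfl

theorem mul_add_add_mul_add_add_one_eq_mul_iff {m n p q j l : ℕ} (hj : j < m) (hl : l < m) :
    m * p + j + (m * q + l) + 1 = m * n ↔ p + q + 1 = n ∧ j + l + 1 = m := by
  constructor
  · intro h
    have hjl : j + l + 1 = m := by
      rcases lt_trichotomy (j + l + 1) m with hlt | heq | hgt
      · have h1 : m * (p + q) < m * n := by nlinarith
        have h2 : m * n < m * (p + q + 1) := by nlinarith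
        have := Nat.lt_of_mul_lt_mul_left h1
        have := Nat.lt_of_mul_lt_mul_left h2
        omega
      · exact heq
      · have h1 : m * (p + q + 1) < m * n := by nlinarith
        have h2 : m * n < m * (p + q + 2) := by nlinarith
        have := Nat.lt_of_mul_lt_mul_left h1
        have := Nat.lt_of_mul_lt_mul_left h2
        omega
    refine ⟨Nat.eq_of_mul_eq_mul_left (by omega : 0 < m) ?_, hjl⟩
    nlinarith
  · rintro ⟨rfl, rfl⟩
    ring

theorem star_onesV (ι : Type*) : star (onesV ι) = onesV ι := by
  funext; simp [onesV]

theorem onesV_prod (ι κ : Type*) : onesV (ι × κ) = fun i => onesV ι i.1 * onesV κ i.2 := by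
  funext; simp [onesV]

theorem vecMul_flipU (k : ℕ) (v : Fin k → ℂ) : v ᵥ* flipU k = v ∘ Fin.rev := by
  funext l
  have hrev : ∀ p : Fin k, (p : ℕ) + l + 1 = k ↔ p = Fin.rev l := by
    intro p; rw [Fin.ext_iff, Fin.val_rev]; omega
  simp [vecMul, dotProduct, flipU, hrev]

theorem UmnM_eq_kronecker (m n : ℕ) : UmnM m n = flipU n ⊗ₖ flipU m := by
  ext ⟨p, j⟩ ⟨q, l⟩
  simp only [UmnM, flipU, of_apply, kroneckerMap_apply, ite_zero_mul_ite_zero, mul_one,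
    mul_add_add_mul_add_add_one_eq_mul_iff j.isLt l.isLt]

theorem A1_eq_kronecker (m n : ℕ) : A1 m n = calA1 n ⊗ₖ 1 := by
  ext ⟨p, j⟩ ⟨q, l⟩
  by_cases h : j = l <;> simp [A1, calA1, one_apply, h]

theorem A2_eq_kronecker (m n : ℕ) : A2 m n = 1 ⊗ₖ calA2 m := by
  ext ⟨p, j⟩ ⟨q, l⟩
  by_cases h : p = q <;> simp [A2, calA2, one_apply, h]

theorem calA2_eq_calA1 : calA2 = calA1 := rfl

theorem resolvent_mul_resolvent_eq_kronecker (m n : ℕ) (u1 u2 : ℂ) :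
    ((A1 m n)ᴴ - u1 • 1)⁻¹ * ((A2 m n)ᴴ - u2 • 1)⁻¹
      = ((calA1 n)ᴴ - u1 • 1)⁻¹ ⊗ₖ ((calA2 m)ᴴ - u2 • 1)⁻¹ := by
  rw [A1_eq_kronecker, A2_eq_kronecker, conjTranspose_kronecker, conjTranspose_kronecker,
    conjTranspose_one, conjTranspose_one, inv_kronecker_one_sub_smul_mul_inv]

theorem conjTranspose_calA1_sub_smul_apply (k : ℕ) (u : ℂ) (p q : Fin k) :
    ((calA1 k)ᴴ - u • 1) p q
      = if p < q then -Complex.I else if p = q then -(u + Complex.I / 2) else 0 := by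
  simp only [Matrix.sub_apply, conjTranspose_apply, Matrix.smul_apply, one_apply, calA1, of_apply,
    aC, smul_eq_mul, Fin.lt_def, Fin.ext_iff]
  split_ifs <;> first | omega | simp [Complex.conj_I] <;> ring

theorem det_conjTranspose_calA1_sub_smul (k : ℕ) (u : ℂ) :
    ((calA1 k)ᴴ - u • 1).det = (-(u + Complex.I / 2)) ^ k := by
  rw [det_of_isUpperTriangular]
  · simp only [conjTranspose_calA1_sub_smul_apply, lt_irrefl, if_false, if_true]
    simp
  · intro p q (hqp : q < p)
    rw [conjTranspose_calA1_sub_smul_apply, if_neg (lt_asymm hqp), if_neg hqp.ne']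

theorem vecMul_conjTranspose_calA1_sub_smul_apply (k : ℕ) (u : ℂ) (v : Fin k → ℂ) (q : Fin k) :
    (v ᵥ* ((calA1 k)ᴴ - u • 1)) q
      = -Complex.I * ∑ p ∈ Finset.Iio q, v p - (u + Complex.I / 2) * v q := by
  simp only [vecMul, dotProduct, conjTranspose_calA1_sub_smul_apply, mul_ite, mul_zero,
    Finset.sum_ite, Finset.sum_const_zero, add_zero, Finset.filter_gt_eq_Iio]
  have hdiag : ({p | ¬p < q} : Finset (Fin k)).filter (· = q) = {q} := by
    ext p; simp only [Finset.mem_filter, Finset.mem_univ, true_and, Finset.mem_singleton]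
    exact ⟨And.right, fun h => ⟨h ▸ lt_irrefl p, h⟩⟩
  rw [hdiag, Finset.sum_singleton, ← Finset.sum_mul]
  ring

def cayley (u : ℂ) : ℂ := (u - Complex.I / 2) / (u + Complex.I / 2)

theorem cayley_neg (u : ℂ) : cayley (-u) = (cayley u)⁻¹ := by
  rw [cayley, cayley, inv_div, show -u - Complex.I / 2 = -(u + Complex.I / 2) by ring,
    show -u + Complex.I / 2 = -(u - Complex.I / 2) by ring, neg_div_neg_eq]

theorem cayley_sub_one_mul (u : ℂ) (hu : u ≠ -(Complex.I / 2)) :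
    (cayley u - 1) * (u + Complex.I / 2) = -Complex.I := by
  have h : u + Complex.I / 2 ≠ 0 := fun h => hu (eq_neg_of_add_eq_zero_left h)
  rw [cayley, sub_mul, div_mul_cancel₀ _ h]
  ring

theorem cayley_div_neg_add (u : ℂ) (hu : u ≠ Complex.I / 2) :
    cayley u / (-u + Complex.I / 2) = -(u + Complex.I / 2)⁻¹ := by
  rw [cayley, show -u + Complex.I / 2 = -(u - Complex.I / 2) by ring, div_neg, div_div,
    mul_comm, ← div_div, div_self (sub_ne_zero.mpr hu), one_div]

theorem ones_vecMul_inv_conjTranspose_calA1_sub_smul (k : ℕ) (u : ℂ)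
    (hu : u ≠ -(Complex.I / 2)) :
    onesV (Fin k) ᵥ* ((calA1 k)ᴴ - u • 1)⁻¹
      = fun p : Fin k => -cayley u ^ (p : ℕ) / (u + Complex.I / 2) := by
  have h : u + Complex.I / 2 ≠ 0 := fun h => hu (eq_neg_of_add_eq_zero_left h)
  apply vecMul_nonsing_inv_eq_of_vecMul_eq
  · rw [det_conjTranspose_calA1_sub_smul]
    exact (pow_ne_zero _ (neg_ne_zero.mpr h)).isUnit
  funext q
  rw [vecMul_conjTranspose_calA1_sub_smul_apply,
    Fin.sum_Iio_eq_sum_range (fun i => -cayley u ^ i / (u + Complex.I / 2)),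
    ← Finset.sum_div, Finset.sum_neg_distrib]
  have hgeom := geom_sum_mul (cayley u) q
  -- writing `-i = (ψ(u) - 1)(u + i/2)` turns the column sum into a geometric sum
  rw [← cayley_sub_one_mul u hu]
  simp only [onesV]
  generalize u + Complex.I / 2 = d at h ⊢
  field_simp
  linear_combination -hgeom

theorem ones_vecMul_inv_conjTranspose_calA1_sub_smul_eq_flip (k : ℕ) (u : ℂ)
    (hu : u ≠ Complex.I / 2) (hu' : u ≠ -(Complex.I / 2)) :
    onesV (Fin k) ᵥ* ((calA1 k)ᴴ - u • 1)⁻¹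
      = -cayley u ^ k • (onesV (Fin k) ᵥ* ((calA1 k)ᴴ + u • 1)⁻¹ ᵥ* flipU k) := by
  have hneg : -u ≠ -(Complex.I / 2) := fun h => hu (neg_injective h)
  have hd : u + Complex.I / 2 ≠ 0 := fun h => hu' (eq_neg_of_add_eq_zero_left h)
  have hd' : u - Complex.I / 2 ≠ 0 := sub_ne_zero.mpr hu
  have hc : cayley u ≠ 0 := div_ne_zero hd' hd
  rw [← sub_neg_eq_add, ← neg_smul, ones_vecMul_inv_conjTranspose_calA1_sub_smul k u hu',
    ones_vecMul_inv_conjTranspose_calA1_sub_smul k (-u) hneg, vecMul_flipU]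
  funext p
  obtain ⟨j, hj⟩ : ∃ j, k = j + (p + 1) := ⟨k - (p + 1), by omega⟩
  simp only [Pi.smul_apply, Function.comp_apply, Fin.val_rev, smul_eq_mul, cayley_neg, hj,
    Nat.add_sub_cancel, pow_add, inv_pow]
  calc -cayley u ^ (p : ℕ) / (u + Complex.I / 2)
      = cayley u ^ (p : ℕ) * (cayley u / (-u + Complex.I / 2))
          * (cayley u ^ j * (cayley u ^ j)⁻¹) := by
        rw [cayley_div_neg_add u hu, mul_inv_cancel₀ (pow_ne_zero _ hc)]
        ring
    _ = _ := by ring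

theorem F_row_symmetry_general (m n : ℕ) (u1 u2 : ℂ)
    (hu1 : u1 ≠ Complex.I / 2) (hu1' : u1 ≠ -(Complex.I / 2))
    (hu2 : u2 ≠ Complex.I / 2) (hu2' : u2 ≠ -(Complex.I / 2)) :
    star (onesV (Fin n × Fin m)) ᵥ* (((A1 m n)ᴴ - u1 • 1)⁻¹ * ((A2 m n)ᴴ - u2 • 1)⁻¹)
      = (((u1 - Complex.I / 2) / (u1 + Complex.I / 2)) ^ n *
          ((u2 - Complex.I / 2) / (u2 + Complex.I / 2)) ^ m) •
          (star (onesV (Fin n × Fin m)) ᵥ*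
            (((A1 m n)ᴴ + u1 • 1)⁻¹ * ((A2 m n)ᴴ + u2 • 1)⁻¹ * UmnM m n)) := by
  rw [resolvent_mul_resolvent_eq_kronecker, ← sub_neg_eq_add _ (u1 • 1),
    ← sub_neg_eq_add _ (u2 • 1), ← neg_smul, ← neg_smul, resolvent_mul_resolvent_eq_kronecker,
    UmnM_eq_kronecker, ← vecMul_vecMul, star_onesV, onesV_prod]
  simp only [vecMul_kronecker, neg_smul, sub_neg_eq_add, calA2_eq_calA1]
  rw [ones_vecMul_inv_conjTranspose_calA1_sub_smul_eq_flip n u1 hu1 hu1',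
    ones_vecMul_inv_conjTranspose_calA1_sub_smul_eq_flip m u2 hu2 hu2']
  funext r
  simp only [Pi.smul_apply, smul_eq_mul, cayley]
  ring

/-- the row-vector symmetry relation (formula (2.37)). -/
theorem F_row_symmetry (m n : ℕ) (hm : 0 < m) (hn : 0 < n) (u1 u2 : ℂ)
    (hu1 : u1 ≠ Complex.I / 2) (hu1' : u1 ≠ -(Complex.I / 2))
    (hu2 : u2 ≠ Complex.I / 2) (hu2' : u2 ≠ -(Complex.I / 2)) :
    star (onesV (Fin n × Fin m)) ᵥ* (((A1 m n)ᴴ - u1 • 1)⁻¹ * ((A2 m n)ᴴ - u2 • 1)⁻¹)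
      = (((u1 - Complex.I / 2) / (u1 + Complex.I / 2)) ^ n *
          ((u2 - Complex.I / 2) / (u2 + Complex.I / 2)) ^ m) •
          (star (onesV (Fin n × Fin m)) ᵥ*
            (((A1 m n)ᴴ + u1 • 1)⁻¹ * ((A2 m n)ᴴ + u2 • 1)⁻¹ * UmnM m n)) :=
  F_row_symmetry_general m n u1 u2 hu1 hu1' hu2 hu2'

end
end
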